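/- arXiv:2603.23655 — 6 statements merged into one kernel-verified Lean document; each statement's English description precedes it below -/
import Mathlib

section
/- Let A > 0 and H = L²([0,A]). Let b be a symmetric bilinear form on H and c₂ ≥ c₁ > 0 constants with c₁²‖x‖₂² ≤ b(x,x) ≤ c₂²‖x‖₂² for all x ∈ H. Let D > 0, β > 1/2, C > 0, and let g ∈ H be essentially bounded. For each integer j ≥ 1 let V_j ⊆ H be a finite-dimensional subspace of essentially bounded functions such that ‖v‖_∞ ≤ D√j · ‖v‖₂ for every v ∈ V_j, let P_j g denote the L²-orthogonal projection of g onto V_j, and assume ‖P_j g‖_∞ ≤ C and ‖P_j g − g‖₂ ≤ C j^{−β}. If q_j ∈ V_j satisfies b(g − q_j, v) = 0 for all v ∈ V_j, then ‖q_j‖_∞ ≤ C(1 + D(1 + c₂/c₁)); in particular sup_{j ≥ 1} ‖q_j‖_∞ < ∞. -/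
open MeasureTheory
open scoped ENNReal RealInnerProductSpace

/-- Sup-norm bound for projections with respect to an equivalent
inner product: with `b` a bilinear form equivalent to the `L²` inner product, `g`
an essentially bounded element of `L²([0,A])`, and `V_j` finite-dimensional
subspaces with inverse inequality `‖v‖_∞ ≤ D√j‖v‖₂`, if the `L²`-orthogonal
projections `P_j g` satisfy `‖P_j g‖_∞ ≤ C` and `‖P_j g − g‖₂ ≤ C j^{−β}` with
`β > 1/2`, then any `b`-orthogonal projection `q_j` of `g` onto `V_j` satisfies
`‖q_j‖_∞ ≤ C(1 + D(1 + c₂/c₁))`. -/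
theorem stmt1 (A : ℝ) (hA : 0 < A)
    (b : (Lp ℝ 2 (volume.restrict (Set.Icc (0:ℝ) A))) →ₗ[ℝ]
         (Lp ℝ 2 (volume.restrict (Set.Icc (0:ℝ) A))) →ₗ[ℝ] ℝ)
    (hbsymm : ∀ x y, b x y = b y x)
    (c₁ c₂ : ℝ) (hc₁ : 0 < c₁) (hc₁₂ : c₁ ≤ c₂)
    (hlow : ∀ x, c₁ ^ 2 * ‖x‖ ^ 2 ≤ b x x)
    (hup : ∀ x, b x x ≤ c₂ ^ 2 * ‖x‖ ^ 2)
    (D : ℝ) (hD : 0 < D) (β : ℝ) (hβ : 1 / 2 < β) (C : ℝ) (hC : 0 < C)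
    (g : Lp ℝ 2 (volume.restrict (Set.Icc (0:ℝ) A)))
    (hg : eLpNorm (⇑g) ∞ (volume.restrict (Set.Icc (0:ℝ) A)) ≠ ∞)
    (V : ℕ → Submodule ℝ (Lp ℝ 2 (volume.restrict (Set.Icc (0:ℝ) A))))
    (hVfd : ∀ j, 1 ≤ j → FiniteDimensional ℝ (V j))
    (hVinf : ∀ j, 1 ≤ j → ∀ v ∈ V j,
      eLpNorm (⇑v) ∞ (volume.restrict (Set.Icc (0:ℝ) A))
        ≤ ENNReal.ofReal (D * Real.sqrt j * ‖v‖))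
    (P : ℕ → Lp ℝ 2 (volume.restrict (Set.Icc (0:ℝ) A)))
    (hPmem : ∀ j, 1 ≤ j → P j ∈ V j)
    (hPorth : ∀ j, 1 ≤ j → ∀ v ∈ V j, ⟪g - P j, v⟫ = 0)
    (hPinf : ∀ j, 1 ≤ j →
      eLpNorm (⇑(P j)) ∞ (volume.restrict (Set.Icc (0:ℝ) A)) ≤ ENNReal.ofReal C)
    (hPapprox : ∀ j, 1 ≤ j → ‖P j - g‖ ≤ C * (j : ℝ) ^ (-β)) :
    ∀ j, 1 ≤ j → ∀ q ∈ V j, (∀ v ∈ V j, b (g - q) v = 0) →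
      eLpNorm (⇑q) ∞ (volume.restrict (Set.Icc (0:ℝ) A))
        ≤ ENNReal.ofReal (C * (1 + D * (1 + c₂ / c₁))) := by
  intro j hj q hq hqorth
  have hc2 : 0 < c₂ := lt_of_lt_of_le hc₁ hc₁₂
  have hw : q - P j ∈ V j := Submodule.sub_mem _ hq (hPmem j hj)
  have hnn : ∀ x, (0:ℝ) ≤ b x x := fun x => le_trans (by positivity) (hlow x)
  -- key energy estimate
  have hkey : b (g - q) (g - q) ≤ b (g - P j) (g - P j) := by
    have hzero : b (g - q) (q - P j) = 0 := hqorth _ hw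
    have hzero' : b (q - P j) (g - q) = 0 := by rw [hbsymm]; exact hzero
    have hdecomp : g - P j = (g - q) + (q - P j) := by abel
    have hexp : b (g - P j) (g - P j)
        = b (g - q) (g - q) + b (q - P j) (q - P j) := by
      rw [hdecomp]
      simp only [map_add, LinearMap.add_apply]
      rw [hzero, hzero']; ring
    linarith [hnn (q - P j)]
  have h1 : ‖g - q‖ ≤ (c₂ / c₁) * ‖g - P j‖ := by
    have h2 : c₁ ^ 2 * ‖g - q‖ ^ 2 ≤ c₂ ^ 2 * ‖g - P j‖ ^ 2 :=
      le_trans (hlow _) (le_trans hkey (hup _))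
    rw [div_mul_eq_mul_div, le_div_iff₀ hc₁]
    nlinarith [norm_nonneg (g - q), norm_nonneg (g - P j), hc₁, hc2,
      mul_nonneg (norm_nonneg (g - q)) hc₁.le,
      mul_nonneg hc2.le (norm_nonneg (g - P j))]
  have hgp : ‖g - P j‖ ≤ C * (j:ℝ) ^ (-β) := by
    rw [norm_sub_rev]; exact hPapprox j hj
  have hqp : ‖q - P j‖ ≤ (1 + c₂ / c₁) * (C * (j:ℝ) ^ (-β)) := by
    have h3 : ‖q - P j‖ ≤ ‖g - q‖ + ‖g - P j‖ := by
      calc ‖q - P j‖ = ‖(q - g) + (g - P j)‖ := by abel_nf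
        _ ≤ ‖q - g‖ + ‖g - P j‖ := norm_add_le _ _
        _ = ‖g - q‖ + ‖g - P j‖ := by rw [norm_sub_rev]
    have hd : 0 ≤ c₂ / c₁ := by positivity
    nlinarith [mul_le_mul_of_nonneg_left hgp hd]
  have hj1 : (1:ℝ) ≤ (j:ℝ) := by exact_mod_cast hj
  have hsq : Real.sqrt j * (j:ℝ) ^ (-β) ≤ 1 := by
    rw [Real.sqrt_eq_rpow, ← Real.rpow_add (by linarith : (0:ℝ) < (j:ℝ))]
    exact Real.rpow_le_one_of_one_le_of_nonpos hj1 (by linarith)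
  have hreal : D * Real.sqrt j * ‖q - P j‖ ≤ C * (D * (1 + c₂ / c₁)) := by
    have hs0 : 0 ≤ Real.sqrt j := Real.sqrt_nonneg _
    have hr0 : (0:ℝ) < (j:ℝ) ^ (-β) := Real.rpow_pos_of_pos (by linarith) _
    have hd : 0 ≤ 1 + c₂ / c₁ := by positivity
    calc D * Real.sqrt j * ‖q - P j‖
        ≤ D * Real.sqrt j * ((1 + c₂ / c₁) * (C * (j:ℝ) ^ (-β))) := by
          apply mul_le_mul_of_nonneg_left hqp (by positivity)
      _ = (Real.sqrt j * (j:ℝ) ^ (-β)) * (D * ((1 + c₂ / c₁) * C)) := by ring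
      _ ≤ 1 * (D * ((1 + c₂ / c₁) * C)) := by
          apply mul_le_mul_of_nonneg_right hsq (by positivity)
      _ = C * (D * (1 + c₂ / c₁)) := by ring
  calc eLpNorm (⇑q) ∞ (volume.restrict (Set.Icc (0:ℝ) A))
      = eLpNorm (⇑(P j) + ⇑(q - P j)) ∞ (volume.restrict (Set.Icc (0:ℝ) A)) := by
        conv_lhs => rw [show q = P j + (q - P j) by abel]
        exact eLpNorm_congr_ae (Lp.coeFn_add _ _)
    _ ≤ eLpNorm (⇑(P j)) ∞ (volume.restrict (Set.Icc (0:ℝ) A)) + eLpNorm (⇑(q - P j)) ∞ (volume.restrict (Set.Icc (0:ℝ) A)) :=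
        eLpNorm_add_le (Lp.aestronglyMeasurable _) (Lp.aestronglyMeasurable _) le_top
    _ ≤ ENNReal.ofReal C + ENNReal.ofReal (D * Real.sqrt j * ‖q - P j‖) :=
        add_le_add (hPinf j hj) (hVinf j hj _ hw)
    _ = ENNReal.ofReal (C + D * Real.sqrt j * ‖q - P j‖) := by
        rw [ENNReal.ofReal_add hC.le (by positivity)]
    _ ≤ ENNReal.ofReal (C * (1 + D * (1 + c₂ / c₁))) := by
        apply ENNReal.ofReal_le_ofReal; nlinarith [hreal]
end

section
/- Let K: ℝ → ℝ be integrable and supported in [−1,1], and for an integer n ≥ 1 define K_n(y) = n·K(n·y) and, for a bounded measurable g: ℝ → ℝ, K_n g(x) = ∫_ℝ K_n(y)·g(x − y) dy. Let 0 < β ≤ 1, L > 0, and let p: ℝ → ℝ satisfy |p(x) − p(y)| ≤ L|x − y|^β for all x, y ∈ ℝ. Let g: ℝ → ℝ be measurable with |g(x)| ≤ M for all x. Then for every x ∈ ℝ and every n ≥ 1, |K_n(p·g)(x) − p(x)·(K_n g)(x)| ≤ L·M·‖K‖_{L¹(ℝ)}·n^{−β}. -/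
open MeasureTheory

/-- Commutator estimate between mollification and multiplication
by a Hölder function: with `K` integrable and supported in `[−1,1]`,
`K_n(y) = n K(ny)`, `p` an `(L,β)`-Hölder function on `ℝ` and `g` measurable with
`|g| ≤ M`, one has `|K_n(p·g)(x) − p(x)·(K_n g)(x)| ≤ L·M·‖K‖₁·n^{−β}`. -/
theorem stmt4 (K : ℝ → ℝ) (hK : Integrable K)
    (hKsupp : ∀ y, y ∉ Set.Icc (-1:ℝ) 1 → K y = 0)
    (β : ℝ) (hβ0 : 0 < β) (hβ1 : β ≤ 1) (L : ℝ) (hL : 0 < L)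
    (p : ℝ → ℝ) (hp : ∀ x y, |p x - p y| ≤ L * |x - y| ^ β)
    (g : ℝ → ℝ) (hg : Measurable g) (M : ℝ) (hM : ∀ x, |g x| ≤ M)
    (n : ℕ) (hn : 1 ≤ n) (x : ℝ) :
    |(∫ y, (n : ℝ) * K (n * y) * (p (x - y) * g (x - y))) -
        p x * ∫ y, (n : ℝ) * K (n * y) * g (x - y)|
      ≤ L * M * (∫ y, |K y|) * (n : ℝ) ^ (-β) := by
  set c : ℝ := (n : ℝ) with hcdef
  have hc1 : (1:ℝ) ≤ c := by rw [hcdef]; exact_mod_cast hn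
  have hc : (0:ℝ) < c := lt_of_lt_of_le one_pos hc1
  have hM0 : 0 ≤ M := (abs_nonneg _).trans (hM 0)
  -- continuity of p
  have hpc : Continuous p := by
    rw [continuous_iff_continuousAt]
    intro a
    rw [ContinuousAt, tendsto_iff_norm_sub_tendsto_zero]
    refine squeeze_zero (g := fun y => L * |y - a| ^ β) (fun y => norm_nonneg _) (fun y => ?_) ?_
    · simpa [Real.norm_eq_abs] using hp y a
    · have h1 : Filter.Tendsto (fun y : ℝ => |y - a|) (nhds a) (nhds 0) :=
        (continuous_id.sub continuous_const).abs.tendsto' a 0 (by simp)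
      have h2 := ((Real.continuousAt_rpow_const 0 β (Or.inr hβ0.le)).tendsto.comp h1).const_mul L
      simpa [Real.zero_rpow hβ0.ne'] using h2
  -- integrability of the scaled kernel
  have hKc : Integrable (fun y => K (c * y)) := hK.comp_mul_left' hc.ne'
  have hKn : Integrable (fun y => c * K (c * y)) := hKc.const_mul c
  have hgm : AEStronglyMeasurable (fun y : ℝ => g (x - y)) volume :=
    (hg.comp (measurable_const.sub measurable_id)).aestronglyMeasurable
  have hint2 : Integrable (fun y => c * K (c * y) * g (x - y)) := by
    have := hKn.bdd_mul (f := fun y : ℝ => g (x - y)) (c := M) hgm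
      (Filter.Eventually.of_forall fun y => by simpa [Real.norm_eq_abs] using hM (x - y))
    simpa [mul_comm] using this
  -- integrability of the first integrand via truncation
  have hq : Integrable (fun y => c * K (c * y) * (p (x - y) * g (x - y))) := by
    set q : ℝ → ℝ := fun y => if |y| ≤ 1 then p (x - y) * g (x - y) else 0 with hqdef
    have hqm : AEStronglyMeasurable q volume := by
      apply Measurable.aestronglyMeasurable
      exact Measurable.ite (measurableSet_le (measurable_id.abs) measurable_const)
        (((hpc.measurable.comp (measurable_const.sub measurable_id)).mul
          (hg.comp (measurable_const.sub measurable_id)))) measurable_const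
    have hqb : ∀ y, ‖q y‖ ≤ (|p x| + L) * M := by
      intro y
      rw [hqdef]
      by_cases hy : |y| ≤ 1
      · simp only [hy, if_true]
        rw [Real.norm_eq_abs, abs_mul]
        have hpy : |p (x - y)| ≤ |p x| + L := by
          have := hp (x - y) x
          have h1 : |x - y - x| = |y| := by rw [show x - y - x = -y by ring, abs_neg]
          rw [h1] at this
          have h2 : |y| ^ β ≤ 1 := Real.rpow_le_one (abs_nonneg _) hy hβ0.le
          calc |p (x - y)| ≤ |p x| + |p (x - y) - p x| := by
                have := abs_sub_abs_le_abs_sub (p (x - y)) (p x); linarith [abs_abs (p (x-y))]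
            _ ≤ |p x| + L * |y| ^ β := by linarith
            _ ≤ |p x| + L := by nlinarith
        exact mul_le_mul hpy (hM _) (abs_nonneg _) (by positivity)
      · simp only [hy, if_false]
        simp; positivity
    have hmain : Integrable (fun y => q y * (c * K (c * y))) :=
      hKn.bdd_mul hqm (Filter.Eventually.of_forall hqb)
    have heq : (fun y => c * K (c * y) * (p (x - y) * g (x - y))) =
        fun y => q y * (c * K (c * y)) := by
      funext y
      rw [hqdef]
      by_cases hy : |y| ≤ 1
      · simp only [hy, if_true]; ring
      · have hcy : K (c * y) = 0 := by
          apply hKsupp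
          intro hmem
          have : |c * y| ≤ 1 := abs_le.mpr ⟨hmem.1, hmem.2⟩
          rw [abs_mul, abs_of_pos hc] at this
          push_neg at hy
          nlinarith [abs_nonneg y]
        simp [hy, hcy]
    rw [heq]; exact hmain
  -- rewrite difference as single integral
  have key : (∫ y, c * K (c * y) * (p (x - y) * g (x - y))) -
      p x * ∫ y, c * K (c * y) * g (x - y)
      = ∫ y, c * K (c * y) * (p (x - y) - p x) * g (x - y) := by
    rw [← integral_const_mul, ← integral_sub hq (hint2.const_mul (p x))]
    congr 1; funext y; ring
  rw [key]
  -- bound the integral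
  have hbound : Integrable (fun y => L * M * c ^ (-β) * (c * |K (c * y)|)) :=
    (hKn.abs.congr (Filter.Eventually.of_forall fun y => by
      show |c * K (c * y)| = c * |K (c * y)|
      rw [abs_mul, abs_of_pos hc])).const_mul _
  have hle : ∀ y, ‖c * K (c * y) * (p (x - y) - p x) * g (x - y)‖ ≤
      L * M * c ^ (-β) * (c * |K (c * y)|) := by
    intro y
    rw [Real.norm_eq_abs, abs_mul, abs_mul, abs_mul, abs_of_pos hc]
    by_cases hKy : K (c * y) = 0
    · simp [hKy]
    · have hmem : c * y ∈ Set.Icc (-1:ℝ) 1 := by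
        by_contra h; exact hKy (hKsupp _ h)
      have hy1 : |y| ≤ c⁻¹ := by
        have : |c * y| ≤ 1 := abs_le.mpr ⟨hmem.1, hmem.2⟩
        rw [abs_mul, abs_of_pos hc] at this
        rw [inv_eq_one_div, le_div_iff₀ hc]; linarith [mul_comm c |y|]
      have hpd : |p (x - y) - p x| ≤ L * c ^ (-β) := by
        have := hp (x - y) x
        have h1 : |x - y - x| = |y| := by rw [show x - y - x = -y by ring, abs_neg]
        rw [h1] at this
        have h2 : |y| ^ β ≤ c ^ (-β) := by
          rw [Real.rpow_neg hc.le, ← Real.inv_rpow hc.le]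
          exact Real.rpow_le_rpow (abs_nonneg _) hy1 hβ0.le
        calc |p (x - y) - p x| ≤ L * |y| ^ β := this
          _ ≤ L * c ^ (-β) := by nlinarith
      have hgb := hM (x - y)
      have hcpos : (0:ℝ) ≤ c * |K (c * y)| := by positivity
      calc c * |K (c * y)| * |p (x - y) - p x| * |g (x - y)|
          ≤ c * |K (c * y)| * (L * c ^ (-β)) * M := by
            apply mul_le_mul _ hgb (abs_nonneg _)
            · positivity
            · exact mul_le_mul_of_nonneg_left hpd hcpos
        _ = L * M * c ^ (-β) * (c * |K (c * y)|) := by ring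
  have := norm_integral_le_of_norm_le hbound (Filter.Eventually.of_forall hle)
  rw [Real.norm_eq_abs] at this
  refine this.trans (le_of_eq ?_)
  calc ∫ y, L * M * c ^ (-β) * (c * |K (c * y)|)
      = L * M * c ^ (-β) * (c * ∫ y, |K (c * y)|) := by
        rw [integral_const_mul, integral_const_mul]
    _ = L * M * c ^ (-β) * (c * (|c⁻¹| * ∫ y, |K y|)) := by
        rw [Measure.integral_comp_mul_left (fun y => |K y|) c, smul_eq_mul]
    _ = (L * M * ∫ y, |K y|) * c ^ (-β) := by
        rw [abs_of_pos (inv_pos.mpr hc)]; field_simp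
end

section
/- Let K: ℝ → ℝ be integrable, supported in [−1,1], with ∫_ℝ K(y) dy = 1, and for an integer n ≥ 1 set K_n(y) = n·K(n·y) and K_n p(x) = ∫_ℝ K_n(y)·p(x − y) dy. Let A > 0, 0 < β ≤ 1, L > 0, M > 0, and let p: ℝ → ℝ vanish outside [0,A], satisfy |p(x)| ≤ M for all x, and satisfy |p(x) − p(y)| ≤ L|x − y|^β for all x, y ∈ [0,A]. Then for every integer n ≥ 1, ∫_ℝ |p(x) − K_n p(x)| dx ≤ A·L·‖K‖_{L¹(ℝ)}·n^{−β} + 4M(1 + ‖K‖_{L¹(ℝ)})·n^{−1}. -/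
/-!
Since `K_n` has mass one, `p x - K_n p x = ∫ K_n y * (p x - p (x - y)) dy`, and only `|y| ≤ 1/n`
contributes. For such `y` the difference `p x - p (x - y)` is at most `L n^{-β}` when `x` and
`x - y` both lie in `[0, A]`, at most `M` when exactly one of them does (which forces `x` to lie
within `1/n` of `0` or of `A`), and zero otherwise. So `|p - K_n p| ≤ ‖K‖₁ c` for a majorant `c`
of the interior and the two boundary layers, and `∫ c = A L n^{-β} + 4 M / n`.
-/

open MeasureTheory Set Filter Topology

theorem ContinuousOn.of_dist_le_mul_rpow {X Y : Type*} [PseudoMetricSpace X] [PseudoMetricSpace Y]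
    {f : X → Y} {s : Set X} {L β : ℝ} (hβ : 0 < β)
    (hf : ∀ x ∈ s, ∀ y ∈ s, dist (f x) (f y) ≤ L * dist x y ^ β) : ContinuousOn f s := by
  intro x hx
  have hbound : Tendsto (fun y => L * dist y x ^ β) (𝓝 x) (𝓝 0) := by
    have hcont : Continuous (fun y => L * dist y x ^ β) :=
      continuous_const.mul ((continuous_id.dist continuous_const).rpow_const fun _ => Or.inr hβ.le)
    simpa [Real.zero_rpow hβ.ne'] using hcont.tendsto x
  refine tendsto_iff_dist_tendsto_zero.2 <|
    squeeze_zero' (Eventually.of_forall fun _ => dist_nonneg) ?_ (hbound.mono_left nhdsWithin_le_nhds)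
  filter_upwards [self_mem_nhdsWithin] with y hy
  exact hf y hy x hx

theorem ContinuousOn.measurable_of_eq_zero_off {α γ : Type*} [TopologicalSpace α] [MeasurableSpace α]
    [OpensMeasurableSpace α] [TopologicalSpace γ] [MeasurableSpace γ] [BorelSpace γ] [Zero γ]
    {f : α → γ} {s : Set α} (hf : ContinuousOn f s) (hs : MeasurableSet s)
    (hf0 : ∀ x ∉ s, f x = 0) : Measurable f := by
  classical
  have : s.piecewise f 0 = f := by
    ext x
    by_cases hx : x ∈ s <;> simp [hx, hf0]
  exact this ▸ hf.measurable_piecewise continuousOn_const hs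

theorem integral_mul_comp_mul_left (g : ℝ → ℝ) {t : ℝ} (ht : 0 < t) :
    ∫ y, t * g (t * y) = ∫ y, g y := by
  rw [integral_const_mul, Measure.integral_comp_mul_left, smul_eq_mul, abs_of_pos (inv_pos.2 ht),
    mul_inv_cancel_left₀ ht.ne']

theorem abs_le_inv_of_mul_comp_mul_left_ne_zero {K : ℝ → ℝ}
    (hK : ∀ y, y ∉ Icc (-1 : ℝ) 1 → K y = 0) {t y : ℝ} (ht : 0 < t) (hy : t * K (t * y) ≠ 0) :
    |y| ≤ t⁻¹ := by
  have hmem : t * y ∈ Icc (-1 : ℝ) 1 := by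
    by_contra h
    simp [hK _ h] at hy
  rw [← one_div, le_div_iff₀' ht, ← abs_of_pos ht, ← abs_mul]
  exact abs_le.2 hmem

theorem abs_sub_integral_mul_le {k p : ℝ → ℝ} (hk : Integrable k) (hk1 : ∫ y, k y = 1) {x C : ℝ}
    (hkp : Integrable fun y => k y * p (x - y))
    (hpC : ∀ y, k y ≠ 0 → |p x - p (x - y)| ≤ C) :
    |p x - ∫ y, k y * p (x - y)| ≤ (∫ y, |k y|) * C := by
  have hdiff : p x - ∫ y, k y * p (x - y) = ∫ y, k y * (p x - p (x - y)) := by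
    simp_rw [mul_sub]
    rw [integral_sub (hk.mul_const _) hkp, integral_mul_const, hk1, one_mul]
  have hpointwise : ∀ y, ‖k y * (p x - p (x - y))‖ ≤ |k y| * C := by
    intro y
    rw [Real.norm_eq_abs, abs_mul]
    rcases eq_or_ne (k y) 0 with h0 | h0
    · simp [h0]
    · exact mul_le_mul_of_nonneg_left (hpC y h0) (abs_nonneg _)
  calc |p x - ∫ y, k y * p (x - y)|
      ≤ ∫ y, |k y| * C := by
        rw [hdiff, ← Real.norm_eq_abs]
        exact norm_integral_le_of_norm_le (hk.abs.mul_const C) (Eventually.of_forall hpointwise)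
    _ = (∫ y, |k y|) * C := integral_mul_const _ _

theorem integral_abs_sub_integral_mul_le {k p c : ℝ → ℝ} (hk : Integrable k)
    (hk1 : ∫ y, k y = 1) (hp : Measurable p) {M : ℝ} (hpM : ∀ x, |p x| ≤ M) (hc : Integrable c)
    (hpc : ∀ x y, k y ≠ 0 → |p x - p (x - y)| ≤ c x) :
    ∫ x, |p x - ∫ y, k y * p (x - y)| ≤ (∫ y, |k y|) * ∫ x, c x := by
  have hkp : ∀ x, Integrable fun y => k y * p (x - y) := fun x =>
    hk.mul_bdd (hp.comp (measurable_const.sub measurable_id)).aestronglyMeasurable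
      (Eventually.of_forall fun y => (Real.norm_eq_abs _).trans_le (hpM _))
  rw [← integral_const_mul]
  exact integral_mono_of_nonneg (Eventually.of_forall fun _ => abs_nonneg _) (hc.const_mul _)
    (Eventually.of_forall fun x => abs_sub_integral_mul_le hk hk1 (hkp x) (hpc x))

theorem integrable_indicator_Icc_const (a b c : ℝ) : Integrable ((Icc a b).indicator fun _ => c) :=
  (integrableOn_const measure_Icc_lt_top.ne).integrable_indicator measurableSet_Icc

theorem integral_indicator_Icc_const {a b : ℝ} (hab : a ≤ b) (c : ℝ) :
    ∫ x, (Icc a b).indicator (fun _ => c) x = (b - a) * c := by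
  rw [integral_indicator_const c measurableSet_Icc, Real.volume_real_Icc_of_le hab, smul_eq_mul]

noncomputable def boundaryLayerMajorant (A h δ M : ℝ) : ℝ → ℝ :=
  (Icc 0 A).indicator (fun _ => δ) + (Icc (-h) h).indicator (fun _ => M)
    + (Icc (A - h) (A + h)).indicator (fun _ => M)

section boundaryLayerMajorant

variable {A h δ M : ℝ}

theorem mem_boundaryLayer_of_mem_Icc_xor {x y : ℝ} (hy : |y| ≤ h)
    (hxor : Xor (x ∈ Icc 0 A) (x - y ∈ Icc 0 A)) : x ∈ Icc (-h) h ∪ Icc (A - h) (A + h) := by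
  rw [abs_le] at hy
  simp only [Xor, mem_Icc, mem_union] at hxor ⊢
  rcases hxor with ⟨⟨hx0, hxA⟩, hxy⟩ | ⟨⟨hxy0, hxyA⟩, hx⟩
  · rcases not_and_or.1 hxy with hxy | hxy
    · exact .inl ⟨by linarith, by linarith⟩
    · exact .inr ⟨by linarith, by linarith⟩
  · rcases not_and_or.1 hx with hx | hx
    · exact .inl ⟨by linarith, by linarith⟩
    · exact .inr ⟨by linarith, by linarith⟩

theorem le_boundaryLayerMajorant_of_mem_Icc (hM : 0 ≤ M) {x : ℝ} (hx : x ∈ Icc 0 A) :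
    δ ≤ boundaryLayerMajorant A h δ M x := by
  have h₁ := indicator_nonneg (fun _ _ => hM) (s := Icc (-h) h) x
  have h₂ := indicator_nonneg (fun _ _ => hM) (s := Icc (A - h) (A + h)) x
  simp only [boundaryLayerMajorant, Pi.add_apply, indicator_of_mem hx]
  linarith

theorem le_boundaryLayerMajorant_of_mem_boundaryLayer (hδ : 0 ≤ δ) (hM : 0 ≤ M) {x : ℝ}
    (hx : x ∈ Icc (-h) h ∪ Icc (A - h) (A + h)) : M ≤ boundaryLayerMajorant A h δ M x := by
  have h₀ := indicator_nonneg (fun _ _ => hδ) (s := Icc 0 A) x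
  have h₁ := indicator_nonneg (fun _ _ => hM) (s := Icc (-h) h) x
  have h₂ := indicator_nonneg (fun _ _ => hM) (s := Icc (A - h) (A + h)) x
  simp only [boundaryLayerMajorant, Pi.add_apply]
  rcases hx with hx | hx
  · rw [indicator_of_mem hx]; linarith
  · rw [indicator_of_mem hx]; linarith

theorem boundaryLayerMajorant_nonneg (hδ : 0 ≤ δ) (hM : 0 ≤ M) (x : ℝ) :
    0 ≤ boundaryLayerMajorant A h δ M x :=
  add_nonneg (add_nonneg (indicator_nonneg (fun _ _ => hδ) x) (indicator_nonneg (fun _ _ => hM) x))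
    (indicator_nonneg (fun _ _ => hM) x)

theorem abs_sub_le_boundaryLayerMajorant {p : ℝ → ℝ} (hδ : 0 ≤ δ) (hM : 0 ≤ M)
    (hpsupp : ∀ x, x ∉ Icc 0 A → p x = 0) (hpM : ∀ x, |p x| ≤ M)
    (hmod : ∀ x ∈ Icc 0 A, ∀ y ∈ Icc 0 A, |x - y| ≤ h → |p x - p y| ≤ δ)
    {x y : ℝ} (hy : |y| ≤ h) : |p x - p (x - y)| ≤ boundaryLayerMajorant A h δ M x := by
  by_cases hx : x ∈ Icc 0 A <;> by_cases hxy : x - y ∈ Icc 0 A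
  · refine (hmod x hx _ hxy (by rwa [sub_sub_cancel])).trans ?_
    exact le_boundaryLayerMajorant_of_mem_Icc hM hx
  · refine le_trans ?_ (le_boundaryLayerMajorant_of_mem_boundaryLayer hδ hM
      (mem_boundaryLayer_of_mem_Icc_xor hy (Or.inl ⟨hx, hxy⟩)))
    rw [hpsupp _ hxy, sub_zero]
    exact hpM x
  · refine le_trans ?_ (le_boundaryLayerMajorant_of_mem_boundaryLayer hδ hM
      (mem_boundaryLayer_of_mem_Icc_xor hy (Or.inr ⟨hxy, hx⟩)))
    rw [hpsupp _ hx, zero_sub, abs_neg]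
    exact hpM _
  · rw [hpsupp _ hx, hpsupp _ hxy, sub_zero, abs_zero]
    exact boundaryLayerMajorant_nonneg hδ hM x

theorem integrable_boundaryLayerMajorant : Integrable (boundaryLayerMajorant A h δ M) :=
  ((integrable_indicator_Icc_const _ _ _).add (integrable_indicator_Icc_const _ _ _)).add
    (integrable_indicator_Icc_const _ _ _)

theorem integral_boundaryLayerMajorant (hA : 0 ≤ A) (hh : 0 ≤ h) :
    ∫ x, boundaryLayerMajorant A h δ M x = A * δ + 4 * h * M := by
  rw [boundaryLayerMajorant,
    integral_add' ((integrable_indicator_Icc_const _ _ _).add (integrable_indicator_Icc_const _ _ _))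
      (integrable_indicator_Icc_const _ _ _),
    integral_add' (integrable_indicator_Icc_const _ _ _) (integrable_indicator_Icc_const _ _ _),
    integral_indicator_Icc_const hA, integral_indicator_Icc_const (by linarith),
    integral_indicator_Icc_const (by linarith)]
  ring

end boundaryLayerMajorant

theorem stmt5_general (K : ℝ → ℝ) (hK : Integrable K)
    (hKsupp : ∀ y, y ∉ Set.Icc (-1:ℝ) 1 → K y = 0)
    (hK1 : (∫ y, K y) = 1)
    (A : ℝ) (hA : 0 < A) (β : ℝ) (hβ0 : 0 < β)
    (L M : ℝ) (hL : 0 < L) (hM : 0 < M)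
    (p : ℝ → ℝ) (hpsupp : ∀ x, x ∉ Set.Icc (0:ℝ) A → p x = 0)
    (hpM : ∀ x, |p x| ≤ M)
    (hpHolder : ∀ x ∈ Set.Icc (0:ℝ) A, ∀ y ∈ Set.Icc (0:ℝ) A,
      |p x - p y| ≤ L * |x - y| ^ β)
    (n : ℕ) (hn : 1 ≤ n) :
    ∫ x, |p x - ∫ y, (n : ℝ) * K (n * y) * p (x - y)|
      ≤ A * L * (∫ y, |K y|) * (n : ℝ) ^ (-β)
        + 4 * M * (1 + ∫ y, |K y|) * (n : ℝ)⁻¹ := by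
  have hn0 : (0 : ℝ) < n := by exact_mod_cast hn
  set k : ℝ → ℝ := fun y => (n : ℝ) * K (n * y) with hk_def
  have hk : Integrable k := (hK.comp_mul_left' hn0.ne').const_mul _
  have hk1 : ∫ y, k y = 1 := (integral_mul_comp_mul_left K hn0).trans hK1
  have hkabs : ∫ y, |k y| = ∫ y, |K y| := by
    simp only [hk_def, abs_mul, abs_of_pos hn0]
    exact integral_mul_comp_mul_left (|K ·|) hn0
  have hp : Measurable p :=
    (ContinuousOn.of_dist_le_mul_rpow hβ0 fun x hx y hy => by
      simpa only [Real.dist_eq] using hpHolder x hx y hy).measurable_of_eq_zero_off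
      measurableSet_Icc hpsupp
  have hmod : ∀ x ∈ Icc 0 A, ∀ y ∈ Icc 0 A, |x - y| ≤ (n : ℝ)⁻¹ →
      |p x - p y| ≤ L * (n : ℝ) ^ (-β) := fun x hx y hy hxy =>
    calc |p x - p y| ≤ L * |x - y| ^ β := hpHolder x hx y hy
      _ ≤ L * (n : ℝ)⁻¹ ^ β := by gcongr
      _ = L * (n : ℝ) ^ (-β) := by rw [Real.inv_rpow hn0.le, Real.rpow_neg hn0.le]
  have hbound := integral_abs_sub_integral_mul_le hk hk1 hp hpM integrable_boundaryLayerMajorant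
    fun x y hy => abs_sub_le_boundaryLayerMajorant (by positivity) hM.le hpsupp hpM hmod
      (abs_le_inv_of_mul_comp_mul_left_ne_zero hKsupp hn0 hy)
  rw [hkabs, integral_boundaryLayerMajorant hA.le (by positivity)] at hbound
  refine hbound.trans ?_
  have hKabs : 0 ≤ ∫ y, |K y| := integral_nonneg fun _ => abs_nonneg _
  nlinarith [mul_pos hM (inv_pos.2 hn0), Real.rpow_nonneg hn0.le (-β)]

/-- `L¹` mollification rate for the zero extension of a Hölder
function: with `K` integrable, supported in `[−1,1]`, of total mass `1`, and `p`
bounded by `M`, vanishing outside `[0,A]`, and `(L,β)`-Hölder on `[0,A]`, one has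
`∫ |p − K_n p| ≤ A·L·‖K‖₁·n^{−β} + 4M(1 + ‖K‖₁)·n^{−1}`. -/
theorem stmt5 (K : ℝ → ℝ) (hK : Integrable K)
    (hKsupp : ∀ y, y ∉ Set.Icc (-1:ℝ) 1 → K y = 0)
    (hK1 : (∫ y, K y) = 1)
    (A : ℝ) (hA : 0 < A) (β : ℝ) (hβ0 : 0 < β) (hβ1 : β ≤ 1)
    (L M : ℝ) (hL : 0 < L) (hM : 0 < M)
    (p : ℝ → ℝ) (hpsupp : ∀ x, x ∉ Set.Icc (0:ℝ) A → p x = 0)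
    (hpM : ∀ x, |p x| ≤ M)
    (hpHolder : ∀ x ∈ Set.Icc (0:ℝ) A, ∀ y ∈ Set.Icc (0:ℝ) A,
      |p x - p y| ≤ L * |x - y| ^ β)
    (n : ℕ) (hn : 1 ≤ n) :
    ∫ x, |p x - ∫ y, (n : ℝ) * K (n * y) * p (x - y)|
      ≤ A * L * (∫ y, |K y|) * (n : ℝ) ^ (-β)
        + 4 * M * (1 + ∫ y, |K y|) * (n : ℝ)⁻¹ :=
  stmt5_general K hK hKsupp hK1 A hA β hβ0 L M hL hM p hpsupp hpM hpHolder n hn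
end

section
/- For every integer m ≥ 1, the series Σ_{n=0}^∞ (2ⁿ/m)·2^{−2ⁿ/m} converges and satisfies Σ_{n=0}^∞ (2ⁿ/m)·2^{−2ⁿ/m} ≤ ⌈log(3m)/log 2⌉ + (log 2)^{−2}. -/
/-!
Write `φ(x) = x·2^{-x}`, so the `n`-th term is `φ(2ⁿ/m)`. Every term is at most `1`, since
`x ≤ 2^x`. Once `2ⁿ/m ≥ 3`, i.e. from `n = ⌈log₂(3m)⌉` on, doubling the argument multiplies
`φ` by `2·2^{-x} ≤ 1/4`, so the tail is dominated by `Σ 4^{-k} = 4/3 ≤ (log 2)^{-2}`.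
-/

open Real

noncomputable def mulTwoRpowNeg (x : ℝ) : ℝ := x * (2 : ℝ) ^ (-x)

lemma mulTwoRpowNeg_nonneg {x : ℝ} (hx : 0 ≤ x) : 0 ≤ mulTwoRpowNeg x :=
  mul_nonneg hx (rpow_nonneg zero_le_two _)

lemma self_le_two_rpow {x : ℝ} (hx : 0 ≤ x) : x ≤ (2 : ℝ) ^ x := by
  rcases le_total x 1 with hx1 | hx1
  · exact hx1.trans (one_le_rpow one_le_two hx)
  · have bernoulli := one_add_mul_self_le_rpow_one_add (s := 1) (by norm_num) hx1
    norm_num at bernoulli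
    linarith

lemma mulTwoRpowNeg_le_one {x : ℝ} (hx : 0 ≤ x) : mulTwoRpowNeg x ≤ 1 := by
  rw [mulTwoRpowNeg, rpow_neg zero_le_two, ← div_eq_mul_inv]
  exact div_le_one_of_le₀ (self_le_two_rpow hx) (rpow_nonneg zero_le_two _)

lemma mulTwoRpowNeg_two_mul_le {x : ℝ} (hx : 3 ≤ x) :
    mulTwoRpowNeg (2 * x) ≤ mulTwoRpowNeg x / 4 := by
  have hsmall : (2 : ℝ) ^ (-x) ≤ 1 / 8 :=
    calc (2 : ℝ) ^ (-x) ≤ 2 ^ (-3 : ℝ) := rpow_le_rpow_of_exponent_le one_le_two (by linarith)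
      _ = 1 / 8 := by norm_num
  have hsplit : (2 : ℝ) ^ (-(2 * x)) = 2 ^ (-x) * 2 ^ (-x) := by
    rw [← rpow_add zero_lt_two]; ring_nf
  have hpos : 0 ≤ x * (2 : ℝ) ^ (-x) := mulTwoRpowNeg_nonneg (by linarith)
  rw [mulTwoRpowNeg, mulTwoRpowNeg, hsplit]
  nlinarith

lemma mulTwoRpowNeg_mul_two_pow_le {x : ℝ} (hx : 3 ≤ x) (k : ℕ) :
    mulTwoRpowNeg (x * 2 ^ k) ≤ (1 / 4) ^ k := by
  induction k with
  | zero => simpa using mulTwoRpowNeg_le_one (by linarith)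
  | succ k ih =>
    have hxk : 3 ≤ x * 2 ^ k := hx.trans (le_mul_of_one_le_right (by linarith) (one_le_pow₀ one_le_two))
    calc mulTwoRpowNeg (x * 2 ^ (k + 1)) = mulTwoRpowNeg (2 * (x * 2 ^ k)) := by ring_nf
      _ ≤ mulTwoRpowNeg (x * 2 ^ k) / 4 := mulTwoRpowNeg_two_mul_le hxk
      _ ≤ (1 / 4) ^ (k + 1) := by rw [pow_succ]; linarith

lemma summable_and_tsum_le_of_tail_le_geometric {u : ℕ → ℝ} {r : ℝ} (N : ℕ)
    (hu : ∀ n, 0 ≤ u n) (hhead : ∀ n < N, u n ≤ 1) (htail : ∀ k, u (k + N) ≤ r ^ k)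
    (hr0 : 0 ≤ r) (hr1 : r < 1) :
    Summable u ∧ ∑' n, u n ≤ N + (1 - r)⁻¹ := by
  have hgeom := summable_geometric_of_lt_one hr0 hr1
  have hsumTail : Summable fun k => u (k + N) :=
    hgeom.of_nonneg_of_le (fun k => hu _) htail
  have hsum : Summable u := (summable_nat_add_iff N).1 hsumTail
  refine ⟨hsum, ?_⟩
  have hheadSum : ∑ n ∈ Finset.range N, u n ≤ N := by
    simpa using Finset.sum_le_card_nsmul _ _ 1 fun n hn => hhead n (Finset.mem_range.1 hn)
  have htailSum : ∑' k, u (k + N) ≤ (1 - r)⁻¹ :=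
    (hsumTail.tsum_le_tsum htail hgeom).trans_eq (tsum_geometric_of_lt_one hr0 hr1)
  rw [← hsum.sum_add_tsum_nat_add N]
  exact add_le_add hheadSum htailSum

lemma le_pow_natCeil_logb {b y : ℝ} (hb : 1 < b) (hy : 0 < y) : y ≤ b ^ ⌈logb b y⌉₊ := by
  rw [← rpow_natCast]
  exact (logb_le_iff_le_rpow hb hy).1 (Nat.le_ceil _)

lemma four_thirds_le_inv_log_two_sq : (4 / 3 : ℝ) ≤ 1 / log 2 ^ 2 := by
  have hlog : log 2 < 0.6931471808 := log_two_lt_d9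
  rw [le_div_iff₀ (pow_pos (log_pos one_lt_two) 2)]
  nlinarith [log_pos one_lt_two]

/-- Entropy-sum estimate from the generic chaining argument: for
every integer `m ≥ 1` the series `Σ_{n≥0} (2ⁿ/m)·2^{−2ⁿ/m}` converges and its sum
is at most `⌈log(3m)/log 2⌉ + (log 2)⁻²`. -/
theorem stmt6 (m : ℕ) (hm : 1 ≤ m) :
    Summable (fun n : ℕ => ((2:ℝ) ^ n / (m : ℝ)) * (2:ℝ) ^ (-((2:ℝ) ^ n / (m : ℝ)))) ∧
      ∑' n : ℕ, ((2:ℝ) ^ n / (m : ℝ)) * (2:ℝ) ^ (-((2:ℝ) ^ n / (m : ℝ)))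
        ≤ (⌈Real.log (3 * (m : ℝ)) / Real.log 2⌉ : ℝ) + 1 / (Real.log 2) ^ 2 := by
  have hm1 : (1 : ℝ) ≤ m := by exact_mod_cast hm
  have hm0 : (0 : ℝ) < m := by linarith
  rw [log_div_log, ← natCast_ceil_eq_intCast_ceil (logb_nonneg one_lt_two (by linarith))]
  set N := ⌈logb 2 (3 * (m : ℝ))⌉₊
  have hstart : 3 ≤ (2 : ℝ) ^ N / m := by
    rw [le_div_iff₀ hm0]
    exact le_pow_natCeil_logb one_lt_two (by positivity)
  have htail (k : ℕ) : mulTwoRpowNeg ((2 : ℝ) ^ (k + N) / m) ≤ (1 / 4) ^ k := by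
    rw [pow_add, mul_div_assoc, mul_comm]
    exact mulTwoRpowNeg_mul_two_pow_le hstart k
  obtain ⟨hsum, hle⟩ := summable_and_tsum_le_of_tail_le_geometric
    (u := fun n => mulTwoRpowNeg ((2 : ℝ) ^ n / m)) N
    (fun n => mulTwoRpowNeg_nonneg (by positivity))
    (fun n _ => mulTwoRpowNeg_le_one (by positivity)) htail (by norm_num) (by norm_num)
  refine ⟨hsum, hle.trans ?_⟩
  linarith [four_thirds_le_inv_log_two_sq]
end

section
/- Let A, T > 0, let m ≥ 0, and let μ be a Borel measure on ℝ such that μ([t − A, t)) ≤ m for every t ∈ [0,T]. Let h: [0,A] → [0,∞) be measurable and square-integrable. Then ∫₀^T ( ∫_{[t−A,t)} h(t − u) dμ(u) )² dt ≤ m · μ([−A, T]) · ∫₀^A h(s)² ds. -/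
/-! Cauchy–Schwarz on each window bounds the squared inner integral by
`m · ∫_{[t−A,t)} h(t−u)² dμ(u)`. Integrating in `t` and swapping the integrals by Tonelli, each
point `u` contributes `∫_{(u, u+A]} h(t−u)² dt = ∫₀^A h²` by translation invariance, so the
double integral is at most `μ([−A,T]) · ∫₀^A h²`. -/

open MeasureTheory Set
open scoped ENNReal

lemma ENNReal.ofReal_pow_le (x : ℝ) (n : ℕ) : ENNReal.ofReal x ^ n ≤ ENNReal.ofReal (x ^ n) := by
  rcases le_total 0 x with hx | hx
  · rw [ENNReal.ofReal_pow hx]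
  · rcases n with _ | n <;> simp [ENNReal.ofReal_of_nonpos hx]

lemma sq_lintegral_le_measure_univ_mul_lintegral_sq {α : Type*} [MeasurableSpace α]
    {μ : Measure α} {f : α → ℝ≥0∞} (hf : AEMeasurable f μ) :
    (∫⁻ x, f x ∂μ) ^ 2 ≤ μ univ * ∫⁻ x, f x ^ 2 ∂μ := by
  have holder := ENNReal.lintegral_mul_le_Lp_mul_Lq μ .two_two hf aemeasurable_const (g := 1)
  simp only [Pi.mul_apply, Pi.one_apply, mul_one, ENNReal.one_rpow, lintegral_one] at holder
  calc (∫⁻ x, f x ∂μ) ^ 2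
      ≤ ((∫⁻ x, f x ^ (2:ℝ) ∂μ) ^ (1/2:ℝ) * μ univ ^ (1/2:ℝ)) ^ 2 := by gcongr
    _ = μ univ * ∫⁻ x, f x ^ 2 ∂μ := by
        simp only [mul_pow, ← ENNReal.rpow_natCast, ← ENNReal.rpow_mul]
        norm_num [mul_comm]

lemma measure_Ico_le_of_forall_measure_Ico_le {μ : Measure ℝ} {A a b : ℝ} {C : ℝ≥0∞}
    (hA : 0 < A) (hab : a ≤ b) (hμ : ∀ t ∈ Icc a b, μ (Ico (t - A) t) ≤ C) :
    μ (Ico (a - A) b) ≤ (⌈(b - a) / A⌉₊ + 1) * C := by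
  have hcover : ∀ n : ℕ, μ (Ico (a - A) (min (a + n * A) b)) ≤ (n + 1) * C := by
    intro n
    induction n with
    | zero => simpa [min_eq_left hab] using hμ a ⟨le_rfl, hab⟩
    | succ n ih =>
      set c := min (a + (n + 1 : ℕ) * A) b
      have hc : c ∈ Icc a b := ⟨le_min (by push_cast; nlinarith) hab, min_le_right _ _⟩
      have hsplit : Ico (a - A) c ⊆ Ico (a - A) (min (a + n * A) b) ∪ Ico (c - A) c := by
        intro u ⟨hu₁, hu₂⟩
        by_cases hu : u < min (a + n * A) b
        · exact Or.inl ⟨hu₁, hu⟩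
        · refine Or.inr ⟨le_trans ?_ (not_lt.1 hu), hu₂⟩
          have : c ≤ a + (n + 1 : ℕ) * A := min_le_left _ _
          push_cast at this
          exact le_min (by linarith) (by linarith [hc.2])
      calc μ (Ico (a - A) c)
          ≤ μ (Ico (a - A) (min (a + n * A) b)) + μ (Ico (c - A) c) :=
            (measure_mono hsplit).trans (measure_union_le _ _)
        _ ≤ (n + 1) * C + C := add_le_add ih (hμ c hc)
        _ = ((n + 1 : ℕ) + 1) * C := by push_cast; ring
  have hn : b ≤ a + ⌈(b - a) / A⌉₊ * A := by
    have := Nat.le_ceil ((b - a) / A)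
    rw [div_le_iff₀ hA] at this
    linarith
  simpa [min_eq_right hn] using hcover ⌈(b - a) / A⌉₊

lemma lintegral_setLIntegral_Ico_sub_eq (ν : Measure ℝ) [SFinite ν] {g : ℝ → ℝ≥0∞}
    (hg : Measurable g) (A : ℝ) :
    ∫⁻ t, ∫⁻ u in Ico (t - A) t, g (t - u) ∂ν = ν univ * ∫⁻ s in Ioc 0 A, g s := by
  have hwindow : ∀ t u, (Ico (t - A) t).indicator (fun u => g (t - u)) u
      = (Ioc 0 A).indicator g (t - u) := by
    intro t u
    simp only [indicator_apply, mem_Ico, mem_Ioc]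
    congr 1
    exact propext ⟨fun ⟨_, _⟩ => ⟨by linarith, by linarith⟩,
      fun ⟨_, _⟩ => ⟨by linarith, by linarith⟩⟩
  simp_rw [← lintegral_indicator measurableSet_Ico, hwindow]
  rw [lintegral_lintegral_swap (by exact ((hg.indicator measurableSet_Ioc).comp
    (measurable_fst.sub measurable_snd)).aemeasurable)]
  simp_rw [lintegral_sub_right_eq_self ((Ioc 0 A).indicator g),
    lintegral_indicator measurableSet_Ioc, lintegral_const, mul_comm]

theorem stmt7_general (A T m : ℝ) (hA : 0 < A) (hT : 0 < T)
    (μ : Measure ℝ)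
    (hμ : ∀ t ∈ Set.Icc (0:ℝ) T, μ (Set.Ico (t - A) t) ≤ ENNReal.ofReal m)
    (h : ℝ → ℝ) (hmeas : Measurable h) :
    ∫⁻ t in Set.Icc (0:ℝ) T,
        (∫⁻ u in Set.Ico (t - A) t, ENNReal.ofReal (h (t - u)) ∂μ) ^ 2
      ≤ ENNReal.ofReal m * μ (Set.Icc (-A) T)
          * ∫⁻ s in Set.Icc (0:ℝ) A, ENNReal.ofReal (h s ^ 2) := by
  set g : ℝ → ℝ≥0∞ := fun s => ENNReal.ofReal (h s ^ 2)
  -- `μ` itself need not be s-finite; Tonelli is applied to its finite restriction `ν`.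
  set ν := μ.restrict (Ico (-A) T)
  have : IsFiniteMeasure ν := ⟨by
    simpa [ν] using (measure_Ico_le_of_forall_measure_Ico_le hA hT.le hμ).trans_lt (by finiteness)⟩
  have hwindow : ∀ t ∈ Icc 0 T,
      (∫⁻ u in Ico (t - A) t, ENNReal.ofReal (h (t - u)) ∂μ) ^ 2
        ≤ ENNReal.ofReal m * ∫⁻ u in Ico (t - A) t, g (t - u) ∂ν := by
    intro t ht
    rw [Measure.restrict_restrict_of_subset (Ico_subset_Ico (by linarith [ht.1]) ht.2)]
    calc _ ≤ μ (Ico (t - A) t) * ∫⁻ u in Ico (t - A) t, ENNReal.ofReal (h (t - u)) ^ 2 ∂μ := by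
          simpa using sq_lintegral_le_measure_univ_mul_lintegral_sq
            (μ := μ.restrict (Ico (t - A) t)) (f := fun u => ENNReal.ofReal (h (t - u)))
            (by fun_prop)
      _ ≤ _ := by
          gcongr with u
          exacts [hμ t ht, ENNReal.ofReal_pow_le _ 2]
  calc _ ≤ ∫⁻ t in Icc 0 T, ENNReal.ofReal m * ∫⁻ u in Ico (t - A) t, g (t - u) ∂ν :=
        setLIntegral_mono' measurableSet_Icc hwindow
    _ ≤ ENNReal.ofReal m * ∫⁻ t, ∫⁻ u in Ico (t - A) t, g (t - u) ∂ν := by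
        rw [lintegral_const_mul' _ _ ENNReal.ofReal_ne_top]
        exact mul_le_mul_right (setLIntegral_le_lintegral _ _) _
    _ = ENNReal.ofReal m * (ν univ * ∫⁻ s in Ioc 0 A, g s) := by
        rw [lintegral_setLIntegral_Ico_sub_eq ν (by fun_prop)]
    _ ≤ _ := by
        rw [← mul_assoc]
        refine mul_le_mul' (mul_le_mul_right ?_ _) (lintegral_mono_set Ioc_subset_Icc_self)
        exact (Measure.restrict_apply_univ _).trans_le (measure_mono Ico_subset_Icc_self)

/-- Pathwise variance bound for sliding-window integrals: if the
measure `μ` gives mass at most `m` to every window `[t−A, t)` with `t ∈ [0,T]`,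
and `h ≥ 0` is measurable and square-integrable on `[0,A]`, then
`∫₀^T (∫_{[t−A,t)} h(t−u) dμ(u))² dt ≤ m·μ([−A,T])·∫₀^A h²`. -/
theorem stmt7 (A T m : ℝ) (hA : 0 < A) (hT : 0 < T) (hm : 0 ≤ m)
    (μ : Measure ℝ)
    (hμ : ∀ t ∈ Set.Icc (0:ℝ) T, μ (Set.Ico (t - A) t) ≤ ENNReal.ofReal m)
    (h : ℝ → ℝ) (hmeas : Measurable h) (hnonneg : ∀ x, 0 ≤ h x)
    (hL2 : ∫⁻ s in Set.Icc (0:ℝ) A, ENNReal.ofReal (h s ^ 2) < ∞) :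
    ∫⁻ t in Set.Icc (0:ℝ) T,
        (∫⁻ u in Set.Ico (t - A) t, ENNReal.ofReal (h (t - u)) ∂μ) ^ 2
      ≤ ENNReal.ofReal m * μ (Set.Icc (-A) T)
          * ∫⁻ s in Set.Icc (0:ℝ) A, ENNReal.ofReal (h s ^ 2) :=
  stmt7_general A T m hA hT μ hμ h hmeas
end

section
/- Let (Ω, 𝓕, P) be a probability space, let N: Ω → ℕ be measurable, let Y: Ω → [0,∞) be measurable and bounded, and let δ ∈ (0,1). Then E[N^{1+δ} · Y^{1−δ}] ≤ ( Σ_{n=0}^∞ n^{1+δ} · P(N = n)^δ ) · (E[Y])^{1−δ}. -/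
open MeasureTheory
open scoped ENNReal

/-!
On the event `{N = n}` the factor `N^{1+δ}` is the constant `n^{1+δ}`, and Hölder's inequality
with exponents `1/δ` and `1/(1-δ)`, applied to `1 · Y^{1-δ}`, bounds the integral of `Y^{1-δ}`
over that event by `P(N = n)^δ (E Y)^{1-δ}`. Summing over `n` gives the estimate.
-/

section

variable {Ω : Type*} [MeasurableSpace Ω] {μ : Measure Ω}

theorem lintegral_comp_mul_eq_tsum_setLIntegral {α : Type*} [Countable α] [MeasurableSpace α]
    [MeasurableSingletonClass α] {N : Ω → α} (hN : Measurable N) (g : α → ℝ≥0∞)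
    {h : Ω → ℝ≥0∞} (hh : AEMeasurable h μ) :
    ∫⁻ ω, g (N ω) * h ω ∂μ = ∑' a, g a * ∫⁻ ω in {ω | N ω = a}, h ω ∂μ := by
  have hfib : ∀ a, MeasurableSet {ω | N ω = a} := fun a => hN (measurableSet_singleton a)
  have hcover : (⋃ a, {ω | N ω = a}) = Set.univ := by ext ω; simp
  rw [← setLIntegral_univ, ← hcover, lintegral_iUnion hfib (pairwise_disjoint_fiber N)]
  refine tsum_congr fun a => ?_
  rw [setLIntegral_congr_fun (hfib a) fun ω (hω : N ω = a) => by rw [hω],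
    lintegral_const_mul'' _ hh.restrict]

theorem lintegral_rpow_one_sub_le_measure_univ_rpow_mul {δ : ℝ} (hδ0 : 0 < δ) (hδ1 : δ < 1)
    {f : Ω → ℝ≥0∞} (hf : AEMeasurable f μ) :
    ∫⁻ ω, f ω ^ (1 - δ) ∂μ ≤ μ Set.univ ^ δ * (∫⁻ ω, f ω ∂μ) ^ (1 - δ) := by
  have hδ' : 0 < 1 - δ := sub_pos.2 hδ1
  have hpq : (1 / δ).HolderConjugate (1 / (1 - δ)) :=
    ⟨by simp only [one_div, inv_inv]; ring, by positivity, one_div_pos.2 hδ'⟩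
  have holder := ENNReal.lintegral_mul_le_Lp_mul_Lq μ hpq (aemeasurable_const (b := 1))
    (hf.pow_const (1 - δ))
  have hf_rpow : ∀ ω, (f ω ^ (1 - δ)) ^ (1 / (1 - δ)) = f ω := fun ω => by
    rw [← ENNReal.rpow_mul, mul_one_div_cancel hδ'.ne', ENNReal.rpow_one]
  simpa only [Pi.mul_apply, one_mul, ENNReal.one_rpow, lintegral_const, one_div_one_div, hf_rpow]
    using holder

theorem setLIntegral_rpow_one_sub_le_measure_rpow_mul {δ : ℝ} (hδ0 : 0 < δ) (hδ1 : δ < 1)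
    {f : Ω → ℝ≥0∞} (hf : AEMeasurable f μ) (s : Set Ω) :
    ∫⁻ ω in s, f ω ^ (1 - δ) ∂μ ≤ μ s ^ δ * (∫⁻ ω, f ω ∂μ) ^ (1 - δ) := by
  have holder := lintegral_rpow_one_sub_le_measure_univ_rpow_mul hδ0 hδ1 (hf.restrict (s := s))
  rw [Measure.restrict_apply_univ] at holder
  exact holder.trans (by gcongr _ * ?_ ^ _; exact setLIntegral_le_lintegral _ _)

end

theorem stmt10_general {Ω : Type*} [MeasurableSpace Ω] (P : Measure Ω)
    (N : Ω → ℕ) (hN : Measurable N)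
    (Y : Ω → ℝ) (hY : Measurable Y)
    (δ : ℝ) (hδ0 : 0 < δ) (hδ1 : δ < 1) :
    ∫⁻ ω, (N ω : ℝ≥0∞) ^ ((1:ℝ) + δ) * ENNReal.ofReal (Y ω) ^ ((1:ℝ) - δ) ∂P
      ≤ (∑' n : ℕ, (n : ℝ≥0∞) ^ ((1:ℝ) + δ) * P {ω | N ω = n} ^ δ)
          * (∫⁻ ω, ENNReal.ofReal (Y ω) ∂P) ^ ((1:ℝ) - δ) := by
  have hY' : AEMeasurable (fun ω => ENNReal.ofReal (Y ω)) P := hY.ennreal_ofReal.aemeasurable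
  calc ∫⁻ ω, (N ω : ℝ≥0∞) ^ ((1:ℝ) + δ) * ENNReal.ofReal (Y ω) ^ ((1:ℝ) - δ) ∂P
      = ∑' n : ℕ, (n : ℝ≥0∞) ^ ((1:ℝ) + δ)
          * ∫⁻ ω in {ω | N ω = n}, ENNReal.ofReal (Y ω) ^ ((1:ℝ) - δ) ∂P :=
        lintegral_comp_mul_eq_tsum_setLIntegral hN (fun n : ℕ => (n : ℝ≥0∞) ^ ((1:ℝ) + δ))
          (hY'.pow_const _)
    _ ≤ ∑' n : ℕ, (n : ℝ≥0∞) ^ ((1:ℝ) + δ)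
          * (P {ω | N ω = n} ^ δ * (∫⁻ ω, ENNReal.ofReal (Y ω) ∂P) ^ ((1:ℝ) - δ)) := by
        gcongr with n
        exact setLIntegral_rpow_one_sub_le_measure_rpow_mul hδ0 hδ1 hY' _
    _ = _ := by simp_rw [← mul_assoc]; exact ENNReal.tsum_mul_right

/-- Moment-splitting estimate via Hölder's inequality on the
events `{N = n}`: for a probability measure `P`, a measurable `N : Ω → ℕ`, a
bounded measurable `Y ≥ 0` and `δ ∈ (0,1)`,
`E[N^{1+δ} Y^{1−δ}] ≤ (Σ_n n^{1+δ} P(N = n)^δ) · (E Y)^{1−δ}`. -/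
theorem stmt10 {Ω : Type*} [MeasurableSpace Ω] (P : Measure Ω)
    [IsProbabilityMeasure P]
    (N : Ω → ℕ) (hN : Measurable N)
    (Y : Ω → ℝ) (hY : Measurable Y) (hY0 : ∀ ω, 0 ≤ Y ω)
    (hYbd : ∃ C : ℝ, ∀ ω, Y ω ≤ C)
    (δ : ℝ) (hδ0 : 0 < δ) (hδ1 : δ < 1) :
    ∫⁻ ω, (N ω : ℝ≥0∞) ^ ((1:ℝ) + δ) * ENNReal.ofReal (Y ω) ^ ((1:ℝ) - δ) ∂P
      ≤ (∑' n : ℕ, (n : ℝ≥0∞) ^ ((1:ℝ) + δ) * P {ω | N ω = n} ^ δ)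
          * (∫⁻ ω, ENNReal.ofReal (Y ω) ∂P) ^ ((1:ℝ) - δ) :=
  stmt10_general P N hN Y hY δ hδ0 hδ1
end
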